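/- arXiv:2206.05682 — 3 statements merged into one kernel-verified Lean document; each statement's English description precedes it below -/
import Mathlib

section
/- Let f₁,...,fₙ ∈ [0,1] with mean f̄ and empirical variance Varₙ = (1/n)∑(fᵢ − f̄)² satisfying Varₙ ≥ λ/n for some λ > 0. Then the maximum of ∑ᵢ pᵢ fᵢ over probability vectors p (pᵢ ≥ 0, ∑pᵢ = 1) satisfying ∑ᵢ(pᵢ − 1/n)² ≤ λ/n² equals f̄ + √(λ·Varₙ/n). -/
/-!
Writing `p = 𝟙/n + d` with `∑ dᵢ = 0`, the objective is `f̄ + ∑ dᵢ (fᵢ - f̄)`, so by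
Cauchy–Schwarz it is at most `f̄ + ‖d‖ ‖f - f̄‖ ≤ f̄ + √(λ/n²) · √(n Varₙ)`. Equality holds
for `d` proportional to `f - f̄` with `‖d‖² = λ/n²`; since `|fᵢ - f̄| ≤ 1`, the condition
`Varₙ ≥ λ/n` makes the proportionality constant at most `1/n`, so this `p` is still
nonnegative.
-/

open Finset
open scoped BigOperators

section

variable {ι : Type*} [Fintype ι]

theorem sum_mul_eq_add_sum_sub_mul_sub {p q : ι → ℝ} (hpq : ∑ i, p i = ∑ i, q i)
    (f : ι → ℝ) (c : ℝ) :
    ∑ i, p i * f i = ∑ i, q i * f i + ∑ i, (p i - q i) * (f i - c) := by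
  simp only [sub_mul, mul_sub, sum_sub_distrib, ← sum_mul, hpq]
  ring

theorem sum_one_div_card_mul_eq_expect (f : ι → ℝ) :
    ∑ i, 1 / (Fintype.card ι : ℝ) * f i = 𝔼 i, f i := by
  rw [← mul_sum, Fintype.expect_eq_sum_div_card]
  ring

noncomputable def uniformTilt (f : ι → ℝ) (t : ℝ) (i : ι) : ℝ :=
  1 / Fintype.card ι + t * (f i - 𝔼 j, f j)

theorem sum_sq_uniformTilt_sub (f : ι → ℝ) (t : ℝ) :
    ∑ i, (uniformTilt f t i - 1 / Fintype.card ι) ^ 2 =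
      t ^ 2 * ∑ i, (f i - 𝔼 j, f j) ^ 2 := by
  simp only [uniformTilt, add_sub_cancel_left, mul_pow, mul_sum]

variable [Nonempty ι]

theorem sum_mul_le_expect_add_sqrt_mul_sqrt {p : ι → ℝ} (hp : ∑ i, p i = 1) (f : ι → ℝ) :
    ∑ i, p i * f i ≤ 𝔼 i, f i +
      √(∑ i, (p i - 1 / Fintype.card ι) ^ 2) * √(∑ i, (f i - 𝔼 j, f j) ^ 2) := by
  have hpq : ∑ i, p i = ∑ _i : ι, 1 / (Fintype.card ι : ℝ) := by simp [hp]
  rw [sum_mul_eq_add_sum_sub_mul_sub hpq f (𝔼 j, f j), sum_one_div_card_mul_eq_expect]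
  gcongr
  exact Real.sum_mul_le_sqrt_mul_sqrt _ _ _

theorem sum_uniformTilt (f : ι → ℝ) (t : ℝ) : ∑ i, uniformTilt f t i = 1 := by
  simp [uniformTilt, sum_add_distrib, ← mul_sum]

theorem sum_uniformTilt_mul (f : ι → ℝ) (t : ℝ) :
    ∑ i, uniformTilt f t i * f i = 𝔼 i, f i + t * ∑ i, (f i - 𝔼 j, f j) ^ 2 := by
  have hpq : ∑ i, uniformTilt f t i = ∑ _i : ι, 1 / (Fintype.card ι : ℝ) := by
    simp [sum_uniformTilt]
  rw [sum_mul_eq_add_sum_sub_mul_sub hpq f (𝔼 j, f j), sum_one_div_card_mul_eq_expect]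
  simp only [uniformTilt, add_sub_cancel_left, mul_assoc, ← sq, ← mul_sum]

theorem uniformTilt_nonneg {f : ι → ℝ} (hf : ∀ i, f i ∈ Set.Icc (0 : ℝ) 1) {t : ℝ}
    (ht₀ : 0 ≤ t) (ht₁ : t ≤ 1 / Fintype.card ι) (i : ι) : 0 ≤ uniformTilt f t i := by
  have hmean : 𝔼 j, f j ∈ Set.Icc (0 : ℝ) 1 :=
    ⟨expect_nonneg fun j _ ↦ (hf j).1, expect_le univ_nonempty fun j _ ↦ (hf j).2⟩
  have hdev := abs_le.mp (abs_sub_le_of_nonneg_of_le (hf i).1 (hf i).2 hmean.1 hmean.2)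
  unfold uniformTilt
  nlinarith

theorem isGreatest_sum_mul_of_sum_sq_sub_one_div_card_le {f : ι → ℝ}
    (hf : ∀ i, f i ∈ Set.Icc (0 : ℝ) 1) {ρ : ℝ} (hρ : 0 ≤ ρ)
    (hρS : ρ * (Fintype.card ι : ℝ) ^ 2 ≤ ∑ i, (f i - 𝔼 j, f j) ^ 2) :
    IsGreatest
      {s : ℝ | ∃ p : ι → ℝ, (∀ i, 0 ≤ p i) ∧ (∑ i, p i = 1) ∧
        (∑ i, (p i - 1 / Fintype.card ι) ^ 2 ≤ ρ) ∧ s = ∑ i, p i * f i}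
      (𝔼 i, f i + √ρ * √(∑ i, (f i - 𝔼 j, f j) ^ 2)) := by
  set N : ℝ := (Fintype.card ι : ℝ)
  set S := ∑ i, (f i - 𝔼 j, f j) ^ 2 with hS
  have hN : 0 < N := Nat.cast_pos.mpr Fintype.card_pos
  have hS₀ : 0 ≤ S := sum_nonneg fun i _ ↦ sq_nonneg _
  refine ⟨⟨uniformTilt f (√ρ / √S), ?_, sum_uniformTilt f _, ?_, ?_⟩, ?_⟩
  · refine uniformTilt_nonneg hf (by positivity)
      (div_le_of_le_mul₀ (by positivity) (by positivity) ?_)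
    calc √ρ = √(ρ * N ^ 2) / N := by rw [Real.sqrt_mul hρ, Real.sqrt_sq hN.le]; field_simp
      _ ≤ √S / N := by gcongr
      _ = 1 / N * √S := by ring
  · rw [sum_sq_uniformTilt_sub, ← hS, div_pow, Real.sq_sqrt hρ, Real.sq_sqrt hS₀]
    rcases hS₀.eq_or_lt with hS₀ | hS₀
    · simpa [← hS₀]
    · rw [div_mul_cancel₀ _ hS₀.ne']
  · rw [sum_uniformTilt_mul, ← hS, div_mul_comm, Real.div_sqrt, mul_comm]
  · rintro _ ⟨p, -, hp, hpρ, rfl⟩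
    exact (sum_mul_le_expect_add_sqrt_mul_sqrt hp f).trans (by gcongr)

end

theorem drbl_chi_squared_max (n : ℕ) (hn : 1 ≤ n) (lam : ℝ) (hlam : 0 < lam)
    (f : Fin n → ℝ) (hf : ∀ i, f i ∈ Set.Icc (0 : ℝ) 1)
    (fbar : ℝ) (hfbar : fbar = (∑ i, f i) / n)
    (Varn : ℝ) (hVarn : Varn = (∑ i, (f i - fbar) ^ 2) / n)
    (hV : lam / n ≤ Varn) :
    IsGreatest
      {s : ℝ | ∃ p : Fin n → ℝ, (∀ i, 0 ≤ p i) ∧ (∑ i, p i = 1) ∧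
        (∑ i, (p i - 1 / n) ^ 2 ≤ lam / (n : ℝ) ^ 2) ∧ s = ∑ i, p i * f i}
      (fbar + Real.sqrt (lam * Varn / n)) := by
  have hn₀ : (0 : ℝ) < n := by exact_mod_cast hn
  have : Nonempty (Fin n) := Fin.pos_iff_nonempty.mp hn
  have hmean : 𝔼 i, f i = fbar := by
    rw [Fintype.expect_eq_sum_div_card, Fintype.card_fin, hfbar]
  have hS : ∑ i, (f i - fbar) ^ 2 = n * Varn := by
    rw [hVarn]
    field_simp
  have hρS :
      lam / (n : ℝ) ^ 2 * (Fintype.card (Fin n) : ℝ) ^ 2 ≤ ∑ i, (f i - 𝔼 j, f j) ^ 2 := by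
    rw [Fintype.card_fin, hmean, hS, div_mul_cancel₀ _ (by positivity), ← div_le_iff₀' hn₀]
    exact hV
  have key := isGreatest_sum_mul_of_sum_sq_sub_one_div_card_le hf (by positivity) hρS
  rw [Fintype.card_fin, hmean, hS, ← Real.sqrt_mul (by positivity)] at key
  convert key using 3
  field_simp
end

section
/- Let Y₁,...,Yₙ be i.i.d. random variables in [0,1] with population variance σ² > 0. Suppose n ≥ max(2, (λ/σ²)·max(8σ, 44)). Then with probability at least 1 − exp(−7nσ²/20), the empirical variance satisfies Varₙ ≥ λ/n. -/
open MeasureTheory ProbabilityTheory Finset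

/-!
Split the sample into a block `B` of `⌊n/2⌋` indices and its complement `A`. The cross sum
`F = ∑_{i ∈ A, j ∈ B} (Yᵢ - Yⱼ)²` is at most `n² Varₙ`, so it suffices to bound `P(F ≤ nλ)`,
which we do by Chernoff's bound with parameter `c = log 4 / |B|`. For a `[0, 1]`-valued `U`,
convexity of `exp` gives `E e^{-θU} ≤ exp (-(1 - e^{-θ}) E U)`. Conditionally on the `B`-block,
`e^{-cF}` is a product of `|A|` independent factors of this form, with `E U` equal to `σ²` plus the
mean squared distance of the `B`-block to the mean; integrating that term out over the `B`-block
with the same inequality gives `E e^{-cF} ≤ exp (-(3|A|/4 + |B| (1 - e^{-3|A|/(4|B|)})) σ²)`.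
-/

section

open Real

theorem Real.exp_neg_mul_le_one_sub_mul (θ : ℝ) {u : ℝ} (h0 : 0 ≤ u) (h1 : u ≤ 1) :
    exp (-(θ * u)) ≤ 1 - (1 - exp (-θ)) * u := by
  have h := convexOn_exp.2 (Set.mem_univ 0) (Set.mem_univ (-θ)) (sub_nonneg.2 h1) h0
    (sub_add_cancel 1 u)
  simp only [smul_eq_mul, mul_zero, zero_add, exp_zero] at h
  rw [show -(θ * u) = u * -θ by ring]
  linarith

theorem integrable_exp_neg_mul_of_nonneg {α : Type*} [MeasurableSpace α] {μ : Measure α}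
    [IsFiniteMeasure μ] {g : α → ℝ} (hg : AEMeasurable g μ) (hg0 : ∀ x, 0 ≤ g x) {c : ℝ}
    (hc : 0 ≤ c) : Integrable (fun x => exp (-(c * g x))) μ :=
  Integrable.of_bound (by fun_prop) 1 (ae_of_all _ fun x => by
    rw [norm_of_nonneg (exp_pos _).le, exp_le_one_iff, neg_nonpos]
    exact mul_nonneg hc (hg0 x))

section Moments

variable {Ω : Type*} [MeasurableSpace Ω] {μ : Measure Ω} [IsProbabilityMeasure μ]

theorem integral_exp_neg_mul_le {X : Ω → ℝ} (hX : AEMeasurable X μ)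
    (h01 : ∀ᵐ ω ∂μ, X ω ∈ Set.Icc 0 1) (θ : ℝ) :
    ∫ ω, exp (-(θ * X ω)) ∂μ ≤ exp (-((1 - exp (-θ)) * μ[X])) := by
  have hX_int : Integrable X μ :=
    (memLp_of_bounded h01 hX.aestronglyMeasurable 1).integrable le_rfl
  calc ∫ ω, exp (-(θ * X ω)) ∂μ ≤ ∫ ω, (1 - (1 - exp (-θ)) * X ω) ∂μ := by
        refine integral_mono_ae ?_ (by fun_prop)
          (h01.mono fun ω h => exp_neg_mul_le_one_sub_mul θ h.1 h.2)
        refine Integrable.of_bound (by fun_prop) (exp |θ|) (h01.mono fun ω h => ?_)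
        rw [norm_of_nonneg (exp_pos _).le, exp_le_exp]
        nlinarith [neg_abs_le θ, le_abs_self θ, h.1, h.2]
    _ = 1 - (1 - exp (-θ)) * μ[X] := by
        rw [integral_sub (integrable_const 1) (hX_int.const_mul _), integral_const_mul]
        simp
    _ ≤ exp (-((1 - exp (-θ)) * μ[X])) := one_sub_le_exp_neg _

theorem integral_sub_const_sq_eq_variance_add {X : Ω → ℝ} (hX : MemLp X 2 μ) (y : ℝ) :
    ∫ ω, (X ω - y) ^ 2 ∂μ = Var[X; μ] + (μ[X] - y) ^ 2 := by
  have hXy : MemLp (fun ω => X ω - y) 2 μ := hX.sub (memLp_const y)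
  have h := variance_eq_sub hXy
  rw [variance_sub_const hX.aestronglyMeasurable,
    integral_sub (hX.integrable one_le_two) (integrable_const y)] at h
  simp only [integral_const, probReal_univ, smul_eq_mul, one_mul, Pi.pow_apply] at h
  linarith

end Moments

section CrossSqSum

variable {ι κ : Type*} [Fintype ι] [Fintype κ]

def crossSqSum (x : ι → ℝ) (y : κ → ℝ) : ℝ := ∑ i, ∑ j, (x i - y j) ^ 2

theorem sum_sum_sub_sq (x : ι → ℝ) :
    ∑ i, ∑ j, (x i - x j) ^ 2 = 2 * (Fintype.card ι * ∑ i, x i ^ 2 - (∑ i, x i) ^ 2) := by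
  simp only [sub_sq, sum_add_distrib, sum_sub_distrib, sum_const, card_univ, nsmul_eq_mul,
    ← mul_sum, ← sum_mul, mul_assoc]
  ring

theorem crossSqSum_subtype_le (p : ι → Prop) [DecidablePred p] (x : ι → ℝ) :
    crossSqSum (fun i : {i // ¬p i} => x i) (fun j : {j // p j} => x j) ≤
      Fintype.card ι * ∑ i, x i ^ 2 - (∑ i, x i) ^ 2 := by
  set C := crossSqSum (fun i : {i // ¬p i} => x i) (fun j : {j // p j} => x j)
  have hswap : ∑ i : {i // p i}, ∑ j : {j // ¬p j}, (x i - x j) ^ 2 = C := by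
    rw [sum_comm]
    exact sum_congr rfl fun i _ => sum_congr rfl fun j _ => by ring
  have hsplit : ∑ i, ∑ j, (x i - x j) ^ 2 =
      (∑ i : {i // p i}, ∑ j : {j // p j}, (x i - x j) ^ 2 + C) +
        (C + ∑ i : {i // ¬p i}, ∑ j : {j // ¬p j}, (x i - x j) ^ 2) := by
    simp only [← Fintype.sum_subtype_add_sum_subtype p, sum_add_distrib, hswap]
    rfl
  have hpp : 0 ≤ ∑ i : {i // p i}, ∑ j : {j // p j}, (x i - x j) ^ 2 := by positivity
  have hnn : 0 ≤ ∑ i : {i // ¬p i}, ∑ j : {j // ¬p j}, (x i - x j) ^ 2 := by positivity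
  linarith [sum_sum_sub_sq x]

theorem crossSqSum_subtype_le_mul_of_lt [Nonempty ι] (p : ι → Prop) [DecidablePred p]
    {x : ι → ℝ} {lam : ℝ}
    (h : (∑ i, x i ^ 2) / Fintype.card ι - ((∑ i, x i) / Fintype.card ι) ^ 2 <
      lam / Fintype.card ι) :
    crossSqSum (fun i : {i // ¬p i} => x i) (fun j : {j // p j} => x j) ≤
      Fintype.card ι * lam := by
  set N : ℝ := (Fintype.card ι : ℝ)
  have hN : 0 < N := Nat.cast_pos.2 Fintype.card_pos
  calc crossSqSum (fun i : {i // ¬p i} => x i) (fun j : {j // p j} => x j)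
      ≤ N * ∑ i, x i ^ 2 - (∑ i, x i) ^ 2 := crossSqSum_subtype_le p x
    _ = N ^ 2 * ((∑ i, x i ^ 2) / N - ((∑ i, x i) / N) ^ 2) := by field_simp
    _ ≤ N ^ 2 * (lam / N) := by gcongr
    _ = N * lam := by field_simp

theorem exp_neg_mul_crossSqSum (c : ℝ) (x : ι → ℝ) (y : κ → ℝ) :
    exp (-(c * crossSqSum x y)) = ∏ i, exp (-(c * ∑ j, (x i - y j) ^ 2)) := by
  rw [← exp_sum, crossSqSum, mul_sum, ← sum_neg_distrib]

end CrossSqSum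

section ExponentialMoment

variable {ι κ : Type*} [Fintype ι] [Fintype κ] {ν : Measure ℝ} [IsProbabilityMeasure ν]

theorem integral_exp_neg_mul_sum_sub_sq_le [Nonempty κ] (h01 : ∀ᵐ t ∂ν, t ∈ Set.Icc 0 1)
    (c : ℝ) {y : κ → ℝ} (hy : ∀ j, y j ∈ Set.Icc 0 1) :
    ∫ t, exp (-(c * ∑ j, (t - y j) ^ 2)) ∂ν ≤
      exp (-((1 - exp (-(c * Fintype.card κ))) *
        (Var[id; ν] + (∑ j, (y j - ν[id]) ^ 2) / Fintype.card κ))) := by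
  have hb : (0 : ℝ) < Fintype.card κ := by exact_mod_cast Fintype.card_pos
  set u : ℝ → ℝ := fun t => (∑ j, (t - y j) ^ 2) / Fintype.card κ
  have hu01 : ∀ᵐ t ∂ν, u t ∈ Set.Icc 0 1 := by
    refine h01.mono fun t ht => ⟨by positivity, ?_⟩
    rw [div_le_one hb]
    calc ∑ j, (t - y j) ^ 2 ≤ ∑ _j : κ, (1 : ℝ) :=
          sum_le_sum fun j _ => by nlinarith [(hy j).1, (hy j).2, ht.1, ht.2]
      _ = Fintype.card κ := by simp
  have hid : MemLp id 2 ν := memLp_of_bounded h01 aestronglyMeasurable_id 2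
  have hmean : ν[u] = Var[id; ν] + (∑ j, (y j - ν[id]) ^ 2) / Fintype.card κ := by
    simp only [u, integral_div]
    have hint : ∀ j, Integrable (fun t : ℝ => (t - y j) ^ 2) ν := fun j =>
      (hid.sub (memLp_const (y j))).integrable_sq
    have hsq : ∀ j, ∫ t, (t - y j) ^ 2 ∂ν = Var[id; ν] + (y j - ν[id]) ^ 2 := fun j => by
      simpa [sub_sq_comm] using integral_sub_const_sq_eq_variance_add hid (y j)
    simp only [integral_finsetSum _ fun j _ => hint j, hsq, sum_add_distrib, sum_const,
      card_univ, nsmul_eq_mul]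
    field_simp
  have h := integral_exp_neg_mul_le (by fun_prop) hu01 (c * Fintype.card κ)
  rw [hmean] at h
  convert h using 4 with t
  simp only [u]
  field_simp

theorem integral_exp_neg_mul_crossSqSum_le [Nonempty κ] (h01 : ∀ᵐ t ∂ν, t ∈ Set.Icc 0 1)
    (c : ℝ) {y : κ → ℝ} (hy : ∀ j, y j ∈ Set.Icc 0 1) :
    ∫ x, exp (-(c * crossSqSum x y)) ∂(Measure.pi fun _ : ι => ν) ≤
      exp (-(Fintype.card ι * (1 - exp (-(c * Fintype.card κ))) *
        (Var[id; ν] + (∑ j, (y j - ν[id]) ^ 2) / Fintype.card κ))) := by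
  simp_rw [exp_neg_mul_crossSqSum]
  rw [integral_fintype_prod_eq_prod (fun _ t => exp (-(c * ∑ j, (t - y j) ^ 2))), prod_const,
    card_univ]
  refine (pow_le_pow_left₀ (integral_nonneg fun _ => (exp_pos _).le)
    (integral_exp_neg_mul_sum_sub_sq_le h01 c hy) _).trans_eq ?_
  rw [← exp_nat_mul]
  congr 1
  ring

theorem integral_prod_exp_neg_mul_sub_mean_sq_le (h01 : ∀ᵐ t ∂ν, t ∈ Set.Icc 0 1) (θ : ℝ) :
    ∫ y, ∏ j, exp (-(θ * (y j - ν[id]) ^ 2)) ∂(Measure.pi fun _ : κ => ν) ≤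
      exp (-(Fintype.card κ * (1 - exp (-θ)) * Var[id; ν])) := by
  have hid : MemLp id 2 ν := memLp_of_bounded h01 aestronglyMeasurable_id 2
  have hm : ν[id] ∈ Set.Icc (0 : ℝ) 1 :=
    (convex_Icc 0 1).integral_mem isClosed_Icc h01 (hid.integrable one_le_two)
  have hsq01 : ∀ᵐ t ∂ν, (t - ν[id]) ^ 2 ∈ Set.Icc 0 1 :=
    h01.mono fun t ht => ⟨by positivity, by nlinarith [ht.1, ht.2, hm.1, hm.2]⟩
  have hvar : ∫ t, (t - ν[id]) ^ 2 ∂ν = Var[id; ν] := by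
    simpa using integral_sub_const_sq_eq_variance_add hid ν[id]
  have h := integral_exp_neg_mul_le (by fun_prop) hsq01 θ
  rw [hvar] at h
  rw [integral_fintype_prod_eq_prod (fun _ t => exp (-(θ * (t - ν[id]) ^ 2))), prod_const,
    card_univ]
  refine (pow_le_pow_left₀ (integral_nonneg fun _ => (exp_pos _).le) h _).trans_eq ?_
  rw [← exp_nat_mul]
  congr 1
  ring

theorem integral_exp_neg_mul_crossSqSum_prod_le [Nonempty κ] (h01 : ∀ᵐ t ∂ν, t ∈ Set.Icc 0 1)
    {c : ℝ} (hc : 0 ≤ c) :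
    ∫ z, exp (-(c * crossSqSum z.2 z.1))
        ∂((Measure.pi fun _ : κ => ν).prod (Measure.pi fun _ : ι => ν)) ≤
      exp (-((Fintype.card ι * (1 - exp (-(c * Fintype.card κ))) +
        Fintype.card κ * (1 - exp (-(Fintype.card ι * (1 - exp (-(c * Fintype.card κ))) /
          Fintype.card κ)))) * Var[id; ν])) := by
  set a : ℝ := (Fintype.card ι : ℝ)
  set b : ℝ := (Fintype.card κ : ℝ)
  set K := 1 - exp (-(c * b))
  have hK : 0 ≤ K := sub_nonneg.2 (exp_le_one_iff.2 (neg_nonpos.2 (by positivity)))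
  have hcross : Measurable fun z : (κ → ℝ) × (ι → ℝ) => crossSqSum z.2 z.1 := by
    unfold crossSqSum; fun_prop
  have hint := integrable_exp_neg_mul_of_nonneg hcross.aemeasurable
    (fun z => by unfold crossSqSum; positivity) hc
    (μ := (Measure.pi fun _ : κ => ν).prod (Measure.pi fun _ : ι => ν))
  have hfactor : Integrable (fun t => exp (-(a * K / b * (t - ν[id]) ^ 2))) ν :=
    integrable_exp_neg_mul_of_nonneg (by fun_prop) (fun t => sq_nonneg _) (by positivity)
  have hbox : ∀ᵐ y ∂(Measure.pi fun _ : κ => ν), ∀ j, y j ∈ Set.Icc 0 1 :=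
    ae_all_iff.2 fun j => Measure.tendsto_eval_ae_ae.eventually h01
  rw [integral_prod _ hint]
  calc ∫ y, ∫ x, exp (-(c * crossSqSum x y)) ∂(Measure.pi fun _ : ι => ν)
        ∂(Measure.pi fun _ : κ => ν)
      ≤ ∫ y, exp (-(a * K * Var[id; ν])) * ∏ j, exp (-(a * K / b * (y j - ν[id]) ^ 2))
          ∂(Measure.pi fun _ : κ => ν) := by
        refine integral_mono_ae hint.integral_prod_left
          ((Integrable.fintype_prod fun _ => hfactor).const_mul _) (hbox.mono fun y hy => ?_)
        refine (integral_exp_neg_mul_crossSqSum_le h01 c hy).trans_eq ?_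
        beta_reduce
        rw [← exp_sum, ← exp_add, sum_div, mul_add, mul_sum, neg_add, ← sum_neg_distrib]
        congr 2
        exact sum_congr rfl fun j _ => by ring
    _ ≤ exp (-(a * K * Var[id; ν])) * exp (-(b * (1 - exp (-(a * K / b))) * Var[id; ν])) := by
        rw [integral_const_mul]
        exact mul_le_mul_of_nonneg_left (integral_prod_exp_neg_mul_sub_mean_sq_le h01 _)
          (exp_pos _).le
    _ = _ := by
        rw [← exp_add]
        ring_nf

theorem measureReal_crossSqSum_subtype_le_le (p : ι → Prop) [DecidablePred p]
    [Nonempty {j // p j}] (h01 : ∀ᵐ t ∂ν, t ∈ Set.Icc 0 1) {c : ℝ} (hc : 0 ≤ c) (t : ℝ) :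
    (Measure.pi fun _ : ι => ν).real
        {x | crossSqSum (fun i : {i // ¬p i} => x i) (fun j : {j // p j} => x j) ≤ t} ≤
      exp (c * t - (Fintype.card {i // ¬p i} * (1 - exp (-(c * Fintype.card {j // p j}))) +
        Fintype.card {j // p j} * (1 - exp (-(Fintype.card {i // ¬p i} *
          (1 - exp (-(c * Fintype.card {j // p j}))) / Fintype.card {j // p j})))) *
            Var[id; ν]) := by
  set F := fun x : ι → ℝ => crossSqSum (fun i : {i // ¬p i} => x i) (fun j : {j // p j} => x j)
  have hF : Measurable F := by simp only [F, crossSqSum]; fun_prop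
  have hmgf : mgf F (Measure.pi fun _ : ι => ν) (-c) =
      ∫ z, exp (-(c * crossSqSum z.2 z.1))
        ∂((Measure.pi fun _ : {j // p j} => ν).prod (Measure.pi fun _ : {i // ¬p i} => ν)) := by
    simp only [mgf, neg_mul]
    exact (measurePreserving_piEquivPiSubtypeProd (fun _ : ι => ν) p).integral_comp'
      (fun z => exp (-(c * crossSqSum z.2 z.1)))
  have hint : Integrable (fun x => exp (-c * F x)) (Measure.pi fun _ : ι => ν) := by
    simpa only [neg_mul] using integrable_exp_neg_mul_of_nonneg hF.aemeasurable
      (fun x => by simp only [F, crossSqSum]; positivity) hc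
  refine (measure_le_le_exp_mul_mgf t (neg_nonpos.2 hc) hint).trans ?_
  rw [hmgf, neg_neg, sub_eq_add_neg, exp_add]
  exact mul_le_mul_of_nonneg_left (integral_exp_neg_mul_crossSqSum_prod_le h01 hc) (exp_pos _).le

end ExponentialMoment

theorem chernoff_exponent_le {a b s lam : ℝ} (hb : 0 < b) (hba : b ≤ a) (hab : a ≤ 3 * b)
    (hs : 0 ≤ s) (hlam : 0 ≤ lam) (h44 : 44 * lam ≤ (a + b) * s) :
    log 4 / b * ((a + b) * lam) - (a * (3 / 4) + b * (1 - exp (-(a * (3 / 4) / b)))) * s ≤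
      -(7 * (a + b) * s) / 20 := by
  have hlog : log 4 < 1.4 := by
    rw [show (4 : ℝ) = 2 ^ 2 by norm_num, log_pow]
    linarith [log_two_lt_d9]
  have hexp : exp (-(a * (3 / 4) / b)) ≤ 4 / 7 :=
    calc exp (-(a * (3 / 4) / b)) ≤ exp (-(3 / 4)) := by
          refine exp_le_exp.2 (neg_le_neg ?_)
          rw [le_div_iff₀ hb]
          linarith
      _ = (exp (3 / 4))⁻¹ := exp_neg _
      _ ≤ 4 / 7 := by
          rw [inv_le_comm₀ (exp_pos _) (by norm_num)]
          linarith [add_one_le_exp (3 / 4 : ℝ)]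
  have hcost : log 4 / b * ((a + b) * lam) ≤ 4 * log 4 * lam := by
    rw [div_mul_eq_mul_div, div_le_iff₀ hb]
    nlinarith [mul_nonneg (log_nonneg (by norm_num : (1 : ℝ) ≤ 4)) hlam]
  have hgain : 3 / 7 * b * s ≤ b * (1 - exp (-(a * (3 / 4) / b))) * s := by
    have : 3 / 7 * b ≤ b * (1 - exp (-(a * (3 / 4) / b))) := by nlinarith
    exact mul_le_mul_of_nonneg_right this hs
  -- the worst case is `a = b`, where `3/8 + 3/14 - 1.4/11 > 7/20`
  nlinarith [mul_le_mul_of_nonneg_right hlog.le hlam, mul_nonneg (sub_nonneg.2 hba) hs]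

end

theorem ofReal_one_sub_le_of_measure_compl_le {α : Type*} [MeasurableSpace α]
    {μ : Measure α} [IsProbabilityMeasure μ] {s : Set α} (hs : MeasurableSet s) {ε : ℝ}
    (hε : 0 ≤ ε) (h : μ sᶜ ≤ ENNReal.ofReal ε) : ENNReal.ofReal (1 - ε) ≤ μ s := by
  calc ENNReal.ofReal (1 - ε) = 1 - ENNReal.ofReal ε := by
        rw [ENNReal.ofReal_sub _ hε, ENNReal.ofReal_one]
    _ ≤ 1 - μ sᶜ := tsub_le_tsub_left h 1
    _ = μ s := by rw [← prob_compl_eq_one_sub hs.compl, compl_compl]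

def halfCrossSqSum {n : ℕ} (x : Fin n → ℝ) : ℝ :=
  crossSqSum (fun i : {i : Fin n // ¬(i : ℕ) < n / 2} => x i)
    (fun j : {j : Fin n // (j : ℕ) < n / 2} => x j)

theorem measureReal_halfCrossSqSum_le_le {ν : Measure ℝ} [IsProbabilityMeasure ν] {n : ℕ}
    (hn : 2 ≤ n) (h01 : ∀ᵐ t ∂ν, t ∈ Set.Icc 0 1) {lam : ℝ} (hlam : 0 ≤ lam)
    (h44 : 44 * lam ≤ n * Var[id; ν]) :
    (Measure.pi fun _ : Fin n => ν).real {x | halfCrossSqSum x ≤ n * lam} ≤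
      Real.exp (-(7 * n * Var[id; ν]) / 20) := by
  have hb : Fintype.card {j : Fin n // (j : ℕ) < n / 2} = n / 2 := by
    rw [Fintype.card_subtype, Fin.card_filter_val_lt]
    omega
  have ha : Fintype.card {i : Fin n // ¬(i : ℕ) < n / 2} = n - n / 2 := by
    rw [Fintype.card_subtype_compl, hb, Fintype.card_fin]
  have : Nonempty {j : Fin n // (j : ℕ) < n / 2} := ⟨⟨⟨0, by omega⟩, by simp; omega⟩⟩
  have hbpos : (0 : ℝ) < (n / 2 : ℕ) := Nat.cast_pos.2 (by omega)
  have hc : 0 ≤ Real.log 4 / (n / 2 : ℕ) := div_nonneg (Real.log_nonneg (by norm_num)) hbpos.le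
  refine (measureReal_crossSqSum_subtype_le_le _ h01 hc _).trans ?_
  rw [ha, hb, div_mul_cancel₀ _ hbpos.ne', Real.exp_neg, Real.exp_log (by norm_num)]
  refine Real.exp_le_exp.2 ?_
  have hsplit : (n : ℝ) = (n - n / 2 : ℕ) + (n / 2 : ℕ) := by
    rw [← Nat.cast_add, Nat.sub_add_cancel (Nat.div_le_self n 2)]
  rw [hsplit] at h44 ⊢
  norm_num only
  exact chernoff_exponent_le hbpos (by exact_mod_cast (by omega : n / 2 ≤ n - n / 2))
    (by exact_mod_cast (by omega : n - n / 2 ≤ 3 * (n / 2))) (variance_nonneg _ _) hlam h44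

theorem empirical_variance_lower_bound_whp
    {Ω : Type*} [MeasurableSpace Ω] (μ : Measure Ω) [IsProbabilityMeasure μ]
    (n : ℕ) (hn2 : 2 ≤ n) (lam : ℝ) (hlam : 0 < lam)
    (Y : Fin n → Ω → ℝ) (hmeas : ∀ i, Measurable (Y i))
    (hbound : ∀ i ω, Y i ω ∈ Set.Icc (0 : ℝ) 1)
    (hindep : iIndepFun Y μ)
    (hident : ∀ i, μ.map (Y i) = μ.map (Y ⟨0, by omega⟩))
    (σ : ℝ) (hσ : 0 < σ) (hσ2 : σ ^ 2 = variance (Y ⟨0, by omega⟩) μ)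
    (hn : (n : ℝ) ≥ max 2 ((lam / σ ^ 2) * max (8 * σ) 44)) :
    ENNReal.ofReal (1 - Real.exp (-(7 * n * σ ^ 2) / 20)) ≤
      μ {ω | lam / n ≤ (∑ i, (Y i ω) ^ 2) / n - ((∑ i, Y i ω) / n) ^ 2} := by
  set ν := μ.map (Y ⟨0, by omega⟩)
  have hY0 : AEMeasurable (Y ⟨0, by omega⟩) μ := (hmeas _).aemeasurable
  have : IsProbabilityMeasure ν := Measure.isProbabilityMeasure_map hY0
  have : Nonempty (Fin n) := ⟨⟨0, by omega⟩⟩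
  have h01 : ∀ᵐ t ∂ν, t ∈ Set.Icc 0 1 :=
    (ae_map_iff hY0 measurableSet_Icc).2 (ae_of_all _ (hbound _))
  have hvar : Var[id; ν] = σ ^ 2 := by rw [variance_id_map hY0, hσ2]
  have hlaw : μ.map (fun ω i => Y i ω) = Measure.pi fun _ => ν := by
    rw [(iIndepFun_iff_map_fun_eq_pi_map fun i => (hmeas i).aemeasurable).1 hindep]
    simp_rw [hident]
  have h44 : 44 * lam ≤ n * Var[id; ν] := by
    have h := (mul_le_mul_of_nonneg_left (le_max_right (8 * σ) 44) (by positivity)).trans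
      ((le_max_right _ _).trans hn)
    rw [div_mul_eq_mul_div, div_le_iff₀ (by positivity)] at h
    rw [hvar]
    linarith
  refine ofReal_one_sub_le_of_measure_compl_le
    (measurableSet_le measurable_const (by fun_prop)) (Real.exp_pos _).le ?_
  calc _ ≤ μ ((fun ω i => Y i ω) ⁻¹' {x | halfCrossSqSum x ≤ n * lam}) :=
        measure_mono fun ω hω => by
          simpa [halfCrossSqSum] using
            crossSqSum_subtype_le_mul_of_lt (x := fun i => Y i ω) _ (by simpa using hω)
    _ ≤ (Measure.pi fun _ => ν) {x | halfCrossSqSum x ≤ n * lam} :=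
        hlaw ▸ Measure.le_map_apply (measurable_pi_lambda _ hmeas).aemeasurable _
    _ ≤ _ := by
        rw [← ofReal_measureReal, ← hvar]
        exact ENNReal.ofReal_le_ofReal (measureReal_halfCrossSqSum_le_le hn2 h01 hlam.le h44)
end

section
/- Let f₁,...,fₙ ∈ [0,1], n ≥ 2, and suppose the fᵢ are not all equal. Then for the maximizer p* of ∑pᵢfᵢ over {p : p ≥ 0, ∑pᵢ = 1, ‖p − 𝟙/n‖₂² ≤ λ/n²} with 0 < λ/n ≤ Varₙ, removing an index j with the strictly smallest score f_j and renormalizing the remaining weights strictly increases the maximum weight: max_{i ≠ j} p*ᵢ/(1 − p*_j) > max_i p*ᵢ whenever p*_j < 1. -/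
/-!
The optimal weights are an increasing affine function of the scores, so the lowest score carries
the smallest weight, and that weight is positive: the deviation `fbar - f j` is below `1`, hence
`√lam * (fbar - f j) < √lam ≤ √(n * Varn)`. Removing the smallest weight does not
change the maximum, and renormalising divides it by `1 - p j ∈ (0, 1)`.
-/

open Finset

lemma sum_div_card_lt_one {ι : Type*} [Fintype ι] {f : ι → ℝ} (hf : ∀ i, f i ≤ 1) {j : ι}
    (hj : f j < 1) : (∑ i, f i) / Fintype.card ι < 1 := by
  have hcard : (0 : ℝ) < Fintype.card ι := Nat.cast_pos.mpr (Fintype.card_pos_iff.mpr ⟨j⟩)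
  rw [div_lt_one hcard]
  simpa using sum_lt_sum (g := fun _ => (1 : ℝ)) (fun i _ => hf i) ⟨j, mem_univ j, hj⟩

lemma Finset.sup'_eq_sup'_erase_of_le {ι α : Type*} [DecidableEq ι] [LinearOrder α]
    {s : Finset ι} (p : ι → α) {j : ι} (hj : j ∈ s) (hne : (s.erase j).Nonempty)
    (hmin : ∀ i ∈ s, p j ≤ p i) : s.sup' ⟨j, hj⟩ p = (s.erase j).sup' hne p := by
  refine le_antisymm (sup'_le _ _ fun i hi => ?_) (sup'_mono p (erase_subset j s) hne)
  obtain rfl | hij := eq_or_ne i j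
  · obtain ⟨k, hk⟩ := hne
    exact le_sup'_of_le p hk (hmin k (mem_of_mem_erase hk))
  · exact le_sup' p (mem_erase.mpr ⟨hij, hi⟩)

lemma Finset.sup'_lt_sup'_erase_div_one_sub {ι : Type*} [DecidableEq ι] {s : Finset ι}
    (p : ι → ℝ) {j : ι} (hj : j ∈ s) (hne : (s.erase j).Nonempty)
    (hmin : ∀ i ∈ s, p j ≤ p i) (hpos : 0 < p j) (hlt : p j < 1) :
    s.sup' ⟨j, hj⟩ p < (s.erase j).sup' hne (fun i => p i / (1 - p j)) := by
  rw [← sup'_div₀ (sub_nonneg.mpr hlt.le), ← sup'_eq_sup'_erase_of_le p hj hne hmin]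
  have hmax : 0 < s.sup' ⟨j, hj⟩ p := hpos.trans_le (le_sup' p hj)
  rw [lt_div_iff₀ (sub_pos.mpr hlt)]
  nlinarith

theorem removing_lowest_score_increases_max_weight_general (n : ℕ)
    (lam : ℝ) (hlam : 0 < lam)
    (f : Fin n → ℝ) (hf : ∀ i, f i ∈ Set.Icc (0 : ℝ) 1)
    (fbar : ℝ) (hfbar : fbar = (∑ i, f i) / n)
    (Varn : ℝ)
    (hV : lam / n ≤ Varn)
    (p : Fin n → ℝ)
    (hp : ∀ i, p i = 1 / n + Real.sqrt lam * (f i - fbar) / (n * Real.sqrt (n * Varn)))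
    (j : Fin n) (hj : ∀ i, i ≠ j → f j < f i) (hpj : p j < 1)
    (hne' : (univ.erase j).Nonempty) :
    univ.sup' (univ_nonempty_iff.mpr ⟨j⟩) p <
      (univ.erase j).sup' hne' (fun i => p i / (1 - p j)) := by
  have hn : (0 : ℝ) < n := Nat.cast_pos.mpr j.pos
  have hmin : ∀ i, f j ≤ f i := fun i => (eq_or_ne i j).elim (fun h => h ▸ le_rfl) (hj i · |>.le)
  obtain ⟨i₀, hi₀⟩ := hne'
  have hfbar_lt : fbar < 1 := by
    simpa [hfbar] using sum_div_card_lt_one (fun i => (hf i).2)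
      ((hj i₀ (ne_of_mem_erase hi₀)).trans_le (hf i₀).2)
  have hsqrt_lam : 0 < √lam := Real.sqrt_pos.mpr hlam
  have hsqrt_le : √lam ≤ √(n * Varn) := Real.sqrt_le_sqrt (by rwa [div_le_iff₀' hn] at hV)
  have hgap : √lam * (fbar - f j) < √(n * Varn) := by nlinarith [(hf j).1]
  refine sup'_lt_sup'_erase_div_one_sub p (mem_univ j) _ (fun i _ => ?_) ?_ hpj
  · rw [hp, hp]
    gcongr
    exact hmin i
  · rw [hp, ← neg_lt_iff_pos_add', lt_div_iff₀ (mul_pos hn (hsqrt_lam.trans_le hsqrt_le))]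
    field_simp
    linarith

theorem removing_lowest_score_increases_max_weight (n : ℕ) (hn : 2 ≤ n)
    (lam : ℝ) (hlam : 0 < lam)
    (f : Fin n → ℝ) (hf : ∀ i, f i ∈ Set.Icc (0 : ℝ) 1) (hne : ∃ i j, f i ≠ f j)
    (fbar : ℝ) (hfbar : fbar = (∑ i, f i) / n)
    (Varn : ℝ) (hVarn : Varn = (∑ i, (f i - fbar) ^ 2) / n)
    (hV : lam / n ≤ Varn)
    (p : Fin n → ℝ)
    (hp : ∀ i, p i = 1 / n + Real.sqrt lam * (f i - fbar) / (n * Real.sqrt (n * Varn)))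
    (j : Fin n) (hj : ∀ i, i ≠ j → f j < f i) (hpj : p j < 1)
    (hne' : (univ.erase j).Nonempty) :
    univ.sup' (univ_nonempty_iff.mpr ⟨j⟩) p <
      (univ.erase j).sup' hne' (fun i => p i / (1 - p j)) :=
  removing_lowest_score_increases_max_weight_general n lam hlam f hf fbar hfbar Varn hV p hp j hj
    hpj hne'
end
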